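/- Let ν be a finite signed Borel measure on ℝ satisfying conditions (A1) and (A2). Then the function f_ν(x) := exp(−2 ν^c((−∞, x])) · ∏_{y ∈ D, y ≤ x} (1 − ν({y}))/(1 + ν({y})) is well-defined for every x ∈ ℝ, and there exist constants 0 < m ≤ M such that m ≤ f_ν(x) ≤ M for every x ∈ ℝ. -/

import Mathlib

open MeasureTheory
open scoped ENNReal

/-- The atomic part of ν evaluated on (−∞, x]: ν_d((−∞,x]) = ∑_{y ∈ D, y ≤ x} ν({y}). -/
noncomputable def atomicPartIic (ν : MeasureTheory.SignedMeasure ℝ) (x : ℝ) : ℝ :=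
  ∑' y : {y : ℝ // ν {y} ≠ 0 ∧ y ≤ x}, ν {(y : ℝ)}

/-- ν^c((−∞, x]), where ν^c := ν − ν_d is the atomless part of ν. -/
noncomputable def contPartIic (ν : MeasureTheory.SignedMeasure ℝ) (x : ℝ) : ℝ :=
  ν (Set.Iic x) - atomicPartIic ν x

/-- The function f_ν(x) := exp(−2 ν^c((−∞, x])) · ∏_{y ∈ D, y ≤ x} (1 − ν({y}))/(1 + ν({y})). -/
noncomputable def fnu (ν : MeasureTheory.SignedMeasure ℝ) (x : ℝ) : ℝ :=
  Real.exp (-2 * contPartIic ν x) *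
    ∏' y : {y : ℝ // ν {y} ≠ 0 ∧ y ≤ x}, (1 - ν {(y : ℝ)}) / (1 + ν {(y : ℝ)})

/-!
Every atom satisfies |ν{y}| ≤ |ν|{y} < 1, and the atom masses are absolutely summable since
their total is at most |ν|(ℝ). As log((1 - a)/(1 + a)) = O(a), the logarithms of the factors
are summable too, so the product converges to exp of the sum of logarithms. Hence
f_ν(x) = exp(g(x)) where g(x) = −2 ν^c((−∞, x]) + ∑_{y ∈ D, y ≤ x} log((1 − ν{y})/(1 + ν{y}))
is bounded in absolute value by a constant C independent of x, giving e^{−C} ≤ f_ν ≤ e^C.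
-/

open Real Set

section RealFamilies

variable {ι : Type*}

lemma abs_tsum_subtype_le {f : ι → ℝ} (hf : Summable f) (s : Set ι) :
    |∑' i : s, f i| ≤ ∑' i, |f i| :=
  calc |∑' i : s, f i| ≤ ∑' i : s, ‖f i‖ := norm_tsum_le_tsum_norm (hf.norm.subtype s)
    _ ≤ ∑' i, |f i| := hf.abs.tsum_subtype_le (fun i => |f i|) s fun _ => abs_nonneg _

lemma summable_log_one_sub_div_one_add {a : ι → ℝ} (ha : Summable a) (ha1 : ∀ i, |a i| < 1) :
    Summable fun i => log ((1 - a i) / (1 + a i)) := by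
  refine ((summable_log_one_add_of_summable ha.neg).sub
    (summable_log_one_add_of_summable ha)).congr fun i => ?_
  obtain ⟨hlo, hhi⟩ := abs_lt.mp (ha1 i)
  rw [log_div (by linarith) (by linarith), sub_eq_add_neg (1 : ℝ)]

lemma hasProd_one_sub_div_one_add {a : ι → ℝ} (ha : Summable a) (ha1 : ∀ i, |a i| < 1) :
    HasProd (fun i => (1 - a i) / (1 + a i)) (exp (∑' i, log ((1 - a i) / (1 + a i)))) := by
  refine hasProd_of_hasSum_log (fun i => ?_) (summable_log_one_sub_div_one_add ha ha1).hasSum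
  obtain ⟨hlo, hhi⟩ := abs_lt.mp (ha1 i)
  exact div_pos (by linarith) (by linarith)

end RealFamilies

namespace MeasureTheory

variable {α : Type*} [MeasurableSpace α]

lemma Measure.summable_measureReal_singleton [MeasurableSingletonClass α] (μ : Measure α)
    [IsFiniteMeasure μ] : Summable fun x : α => μ.real {x} :=
  summable_of_sum_le (fun _ => measureReal_nonneg) fun u => by
    rw [sum_measureReal_singleton]
    exact measureReal_mono (subset_univ _)

namespace SignedMeasure

variable (ν : SignedMeasure α)

lemma summable_apply_singleton [MeasurableSingletonClass α] : Summable fun x : α => ν {x} :=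
  .of_norm_bounded ν.totalVariation.summable_measureReal_singleton
    fun x => ν.norm_le_totalVariation {x}

lemma abs_apply_le_totalVariation_univ (s : Set α) : |ν s| ≤ ν.totalVariation.real univ :=
  (ν.norm_le_totalVariation s).trans (measureReal_mono (subset_univ s))

end SignedMeasure

end MeasureTheory

lemma abs_contPartIic_le (ν : SignedMeasure ℝ) (x : ℝ) :
    |contPartIic ν x| ≤ ν.totalVariation.real univ + ∑' y, |ν {y}| :=
  calc |contPartIic ν x| ≤ |ν (Iic x)| + |atomicPartIic ν x| := abs_sub _ _
    _ ≤ ν.totalVariation.real univ + ∑' y, |ν {y}| :=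
      add_le_add (ν.abs_apply_le_totalVariation_univ _)
        (abs_tsum_subtype_le ν.summable_apply_singleton {y | ν {y} ≠ 0 ∧ y ≤ x})

/-- Under (A1) (and (A2), automatic for a signed measure), the function
f_ν is well-defined for every x (the defining sum and product converge) and there exist
constants 0 < m ≤ M such that m ≤ f_ν(x) ≤ M for every x ∈ ℝ. -/
theorem fnu_wellDefined_and_bounded (ν : MeasureTheory.SignedMeasure ℝ)
    (hA1 : ∀ a : ℝ, ν.totalVariation {a} < 1) :
    (∀ x : ℝ, Summable (fun y : {y : ℝ // ν {y} ≠ 0 ∧ y ≤ x} => ν {(y : ℝ)}) ∧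
      Multipliable (fun y : {y : ℝ // ν {y} ≠ 0 ∧ y ≤ x} =>
        (1 - ν {(y : ℝ)}) / (1 + ν {(y : ℝ)}))) ∧
    (∃ m M : ℝ, 0 < m ∧ m ≤ M ∧ ∀ x : ℝ, m ≤ fnu ν x ∧ fnu ν x ≤ M) := by
  have hatom (y : ℝ) : |ν {y}| < 1 :=
    (ν.norm_le_totalVariation {y}).trans_lt <|
      ENNReal.toReal_lt_of_lt_ofReal (by simpa using hA1 y)
  have hsum := ν.summable_apply_singleton
  have hprod (x : ℝ) := hasProd_one_sub_div_one_add
    (a := fun y : {y : ℝ // ν {y} ≠ 0 ∧ y ≤ x} => ν {(y : ℝ)}) (hsum.subtype _) fun y => hatom y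
  refine ⟨fun x => ⟨hsum.subtype _, (hprod x).multipliable⟩, ?_⟩
  set C := 2 * (ν.totalVariation.real univ + ∑' y, |ν {y}|) +
    ∑' y, |log ((1 - ν {y}) / (1 + ν {y}))|
  have hlog (x : ℝ) : |-2 * contPartIic ν x +
      ∑' y : {y : ℝ // ν {y} ≠ 0 ∧ y ≤ x}, log ((1 - ν {(y : ℝ)}) / (1 + ν {(y : ℝ)}))| ≤ C :=
    (abs_add_le _ _).trans <| add_le_add
      (by rw [abs_mul, abs_neg, abs_two]; gcongr; exact abs_contPartIic_le ν x)
      (abs_tsum_subtype_le (summable_log_one_sub_div_one_add hsum hatom) _)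
  refine ⟨exp (-C), exp C, exp_pos _,
    exp_le_exp.mpr (neg_le_self ((abs_nonneg _).trans (hlog 0))), fun x => ?_⟩
  rw [fnu, (hprod x).tprod_eq, ← exp_add]
  obtain ⟨hlo, hhi⟩ := abs_le.mp (hlog x)
  exact ⟨exp_le_exp.mpr hlo, exp_le_exp.mpr hhi⟩
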